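/- For n ≥ 8, the Q-index of the graph S_{n,3} is the largest real root of the polynomial φ₁(x,n) = x³ − n·x² + (3n − 8)·x − n. -/

import Mathlib

open SimpleGraph

/-- The degree of a vertex (with classical decidability). -/
noncomputable def deg {V : Type*} [Fintype V] (G : SimpleGraph V) (v : V) : ℕ :=
  letI := Classical.decEq V
  letI := Classical.decRel G.Adj
  G.degree v

/-- The signless Laplacian matrix `Q(G) = D(G) + A(G)` of a graph. -/
noncomputable def signlessLaplacian {V : Type*} [Fintype V] (G : SimpleGraph V) :
    Matrix V V ℝ :=
  letI := Classical.decEq V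
  letI := Classical.decRel G.Adj
  Matrix.diagonal (fun v => (G.degree v : ℝ)) + G.adjMatrix ℝ

/-- The `Q`-index of a graph: the largest eigenvalue of its signless Laplacian. -/
noncomputable def qIndex {V : Type*} [Fintype V] (G : SimpleGraph V) : ℝ :=
  sSup {μ : ℝ | ∃ x : V → ℝ, x ≠ 0 ∧ (signlessLaplacian G).mulVec x = μ • x}

/-- The maximum degree `Δ(G)` (with classical decidability). -/
noncomputable def maxDeg {V : Type*} [Fintype V] (G : SimpleGraph V) : ℕ :=
  letI := Classical.decEq V
  letI := Classical.decRel G.Adj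
  G.maxDegree

/-- The number of edges (the size) of a graph. -/
noncomputable def edgeCount {V : Type*} (G : SimpleGraph V) : ℕ := G.edgeSet.ncard

/-- `graphS3 n` : the tree `S_{n,3}` on `n` vertices, obtained from the star `K_{1,n-7}`
(center `0`, leaves `1,…,n-7`) by attaching three pendant paths of length 2,
namely `0 — (n-6) — (n-5)`, `0 — (n-4) — (n-3)` and `0 — (n-2) — (n-1)`, at the center. -/
def graphS3 (n : ℕ) : SimpleGraph (Fin n) :=
  SimpleGraph.fromRel (fun u v =>
    (u.val = 0 ∧ ((1 ≤ v.val ∧ v.val ≤ n - 7) ∨ v.val = n - 6 ∨ v.val = n - 4 ∨ v.val = n - 2)) ∨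
    (u.val = n - 6 ∧ v.val = n - 5) ∨ (u.val = n - 4 ∧ v.val = n - 3) ∨
    (u.val = n - 2 ∧ v.val = n - 1))

/-!
For `μ > 3` the eigen-equations of `Q(S_{n,3})` at the star leaves and along the pendant paths
determine an eigenvector from its value at the centre, so every such eigenvector is a multiple of
one explicit vector; the remaining equation, at the centre, then reads `μ φ₁(μ) = 0`. Conversely
that vector is an eigenvector for every root of `φ₁`. The largest root of `φ₁` lies in
`[n - 3, n - 1]`, so it exceeds `3` and is therefore the largest eigenvalue.
-/

open Finset
open scoped Matrix

theorem signlessLaplacian_mulVec_apply {V : Type*} [Fintype V] [DecidableEq V]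
    (G : SimpleGraph V) [DecidableRel G.Adj] (x : V → ℝ) (u : V) :
    (signlessLaplacian G *ᵥ x) u = ∑ w ∈ G.neighborFinset u, (x u + x w) := by
  have hQ : signlessLaplacian G =
      Matrix.diagonal (fun v => (G.degree v : ℝ)) + G.adjMatrix ℝ := by
    unfold signlessLaplacian; congr!
  rw [hQ, Matrix.add_mulVec, Pi.add_apply, Matrix.mulVec_diagonal, adjMatrix_mulVec_apply,
    sum_add_distrib, sum_const, card_neighborFinset_eq_degree, nsmul_eq_mul]

/-- The paper's `φ₁(x, n)`. -/
def phi₁ (n x : ℝ) : ℝ := x ^ 3 - n * x ^ 2 + (3 * n - 8) * x - n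

theorem phi₁_pos_of_lt {n x : ℝ} (hn : 3 ≤ n) (hx : n < x) : 0 < phi₁ n x := by
  have hx0 : 0 < x := by linarith
  unfold phi₁
  nlinarith [mul_pos (mul_pos hx0 hx0) (sub_pos.2 hx), mul_le_mul_of_nonneg_right hx.le hx0.le]

theorem exists_phi₁_eq_zero_mem_Icc {n : ℝ} (hn : 5 ≤ n) :
    ∃ x ∈ Set.Icc (n - 3) (n - 1), phi₁ n x = 0 := by
  have hcont : ContinuousOn (phi₁ n) (Set.Icc (n - 3) (n - 1)) := by unfold phi₁; fun_prop
  have hlo : phi₁ n (n - 3) = -3 := by unfold phi₁; ring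
  have hhi : phi₁ n (n - 1) = 2 * n ^ 2 - 10 * n + 7 := by unfold phi₁; ring
  exact intermediate_value_Icc (by linarith) hcont
    ⟨by rw [hlo]; norm_num, by rw [hhi]; nlinarith⟩

theorem exists_isGreatest_phi₁_eq_zero {n : ℝ} (hn : 5 ≤ n) :
    ∃ r, IsGreatest {x | phi₁ n x = 0} r ∧ n - 3 ≤ r := by
  obtain ⟨x₀, hx₀, hroot⟩ := exists_phi₁_eq_zero_mem_Icc hn
  have hbdd : BddAbove {x | phi₁ n x = 0} :=
    ⟨n, fun x hx => not_lt.1 fun hlt => (phi₁_pos_of_lt (by linarith) hlt).ne' hx⟩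
  have hclosed : IsClosed {x | phi₁ n x = 0} :=
    isClosed_eq (by unfold phi₁; fun_prop) continuous_const
  exact ⟨_, ⟨hclosed.csSup_mem ⟨x₀, hroot⟩ hbdd, fun _ => (le_csSup hbdd ·)⟩,
    hx₀.1.trans (le_csSup hbdd hroot)⟩

theorem Fin.card_filter_val {n : ℕ} (p : ℕ → Prop) [DecidablePred p] :
    #{w : Fin n | p w.val} = #{i ∈ range n | p i} := by
  rw [← card_map Fin.valEmbedding]
  congr 1
  ext i
  simp only [mem_map, mem_filter, mem_univ, true_and, Fin.valEmbedding_apply, mem_range]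
  exact ⟨fun ⟨w, hw, hwi⟩ => hwi ▸ ⟨w.isLt, hw⟩,
    fun ⟨hi, hp⟩ => ⟨⟨i, hi⟩, hp, rfl⟩⟩

abbrev IsS3Leaf (n i : ℕ) : Prop := 1 ≤ i ∧ i ≤ n - 7

abbrev IsS3Mid (n i : ℕ) : Prop := i = n - 6 ∨ i = n - 4 ∨ i = n - 2

namespace graphS3

variable {n : ℕ}

theorem vertex_cases (hn : 8 ≤ n) (u : Fin n) :
    u.val = 0 ∨ IsS3Leaf n u.val ∨ IsS3Mid n u.val ∨
      ∃ m : Fin n, IsS3Mid n m.val ∧ u.val = m.val + 1 := by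
  by_cases h : u.val = 0 ∨ IsS3Leaf n u.val ∨ IsS3Mid n u.val
  · tauto
  · refine Or.inr (Or.inr (Or.inr ⟨⟨u.val - 1, by omega⟩, ?_, ?_⟩)) <;> simp only <;> omega

theorem adj_center_iff (hn : 8 ≤ n) {c w : Fin n} (hc : c.val = 0) :
    (graphS3 n).Adj c w ↔ IsS3Leaf n w.val ∨ IsS3Mid n w.val := by
  simp only [graphS3, fromRel_adj, ne_eq, Fin.ext_iff, IsS3Leaf, IsS3Mid]
  constructor
  · rintro ⟨-, h | h⟩ <;> omega
  · intro h
    exact ⟨by omega, Or.inl (Or.inl ⟨hc, h⟩)⟩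

theorem adj_leaf_iff (hn : 8 ≤ n) {l w : Fin n} (hl : IsS3Leaf n l.val) :
    (graphS3 n).Adj l w ↔ w.val = 0 := by
  simp only [graphS3, fromRel_adj, ne_eq, Fin.ext_iff, IsS3Leaf] at *
  constructor
  · rintro ⟨-, h | h⟩ <;> omega
  · intro h
    exact ⟨by omega, Or.inr (Or.inl ⟨h, Or.inl hl⟩)⟩

theorem adj_mid_iff (hn : 8 ≤ n) {m w : Fin n} (hm : IsS3Mid n m.val) :
    (graphS3 n).Adj m w ↔ w.val = 0 ∨ w.val = m.val + 1 := by
  simp only [graphS3, fromRel_adj, ne_eq, Fin.ext_iff, IsS3Mid] at *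
  constructor
  · rintro ⟨-, h | h⟩ <;> omega
  · rintro (h | h)
    · exact ⟨by omega, Or.inr (Or.inl ⟨h, Or.inr hm⟩)⟩
    refine ⟨by omega, Or.inl (Or.inr ?_)⟩
    rcases hm with hm | hm | hm
    · exact Or.inl ⟨hm, by omega⟩
    · exact Or.inr (Or.inl ⟨hm, by omega⟩)
    · exact Or.inr (Or.inr ⟨hm, by omega⟩)

theorem adj_end_iff (hn : 8 ≤ n) {m p w : Fin n} (hm : IsS3Mid n m.val) (hp : p.val = m.val + 1) :
    (graphS3 n).Adj p w ↔ w = m := by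
  simp only [graphS3, fromRel_adj, ne_eq, Fin.ext_iff, IsS3Mid] at *
  constructor
  · rintro ⟨-, h | h⟩ <;> omega
  · intro h
    refine ⟨by omega, Or.inr (Or.inr ?_)⟩
    rcases hm with hm | hm | hm
    · exact Or.inl ⟨by omega, by omega⟩
    · exact Or.inr (Or.inl ⟨by omega, by omega⟩)
    · exact Or.inr (Or.inr ⟨by omega, by omega⟩)

theorem card_leaves : #{w : Fin n | IsS3Leaf n w.val} = n - 7 := by
  rw [Fin.card_filter_val (IsS3Leaf n), show {i ∈ range n | IsS3Leaf n i} = Icc 1 (n - 7) by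
    ext i; simp only [mem_filter, mem_range, mem_Icc]; omega]
  simp

theorem card_mids (hn : 8 ≤ n) : #{w : Fin n | IsS3Mid n w.val} = 3 := by
  rw [Fin.card_filter_val (IsS3Mid n), show {i ∈ range n | IsS3Mid n i} = {n - 6, n - 4, n - 2} by
    ext i; simp only [mem_filter, mem_range, mem_insert, mem_singleton]; omega]
  rw [card_insert_of_notMem (by simp; omega), card_insert_of_notMem (by simp; omega),
    card_singleton]

section mulVec

variable (x : Fin n → ℝ)

theorem mulVec_leaf (hn : 8 ≤ n) {c l : Fin n} (hc : c.val = 0) (hl : IsS3Leaf n l.val) :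
    (signlessLaplacian (graphS3 n) *ᵥ x) l = x l + x c := by
  classical
  have hN : (graphS3 n).neighborFinset l = {c} := by
    ext w; simp [adj_leaf_iff hn hl, Fin.ext_iff, hc]
  rw [signlessLaplacian_mulVec_apply, hN, sum_singleton]

theorem mulVec_mid (hn : 8 ≤ n) {c m p : Fin n} (hc : c.val = 0) (hm : IsS3Mid n m.val)
    (hp : p.val = m.val + 1) :
    (signlessLaplacian (graphS3 n) *ᵥ x) m = 2 * x m + x c + x p := by
  classical
  have hN : (graphS3 n).neighborFinset m = {c, p} := by
    ext w; simp [adj_mid_iff hn hm, Fin.ext_iff, hc, hp]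
  rw [signlessLaplacian_mulVec_apply, hN, sum_pair (Fin.ne_of_val_ne (by omega))]
  ring

theorem mulVec_end (hn : 8 ≤ n) {m p : Fin n} (hm : IsS3Mid n m.val) (hp : p.val = m.val + 1) :
    (signlessLaplacian (graphS3 n) *ᵥ x) p = x p + x m := by
  classical
  have hN : (graphS3 n).neighborFinset p = {m} := by
    ext w; simp [adj_end_iff hn hm hp]
  rw [signlessLaplacian_mulVec_apply, hN, sum_singleton]

theorem mulVec_center (hn : 8 ≤ n) {c : Fin n} (hc : c.val = 0) {b d : ℝ}
    (hb : ∀ l : Fin n, IsS3Leaf n l.val → x l = b)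
    (hd : ∀ m : Fin n, IsS3Mid n m.val → x m = d) :
    (signlessLaplacian (graphS3 n) *ᵥ x) c = (n - 7) * (x c + b) + 3 * (x c + d) := by
  classical
  have hN : (graphS3 n).neighborFinset c =
      ({w | IsS3Leaf n w.val} : Finset (Fin n)) ∪ ({w | IsS3Mid n w.val} : Finset (Fin n)) := by
    ext w; simp [adj_center_iff hn hc]
  have hdisj : Disjoint ({w | IsS3Leaf n w.val} : Finset (Fin n))
      ({w | IsS3Mid n w.val} : Finset (Fin n)) := by
    rw [disjoint_filter]; intro w _ hl hm; omega
  have hleaves :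
      ∑ l ∈ ({w | IsS3Leaf n w.val} : Finset (Fin n)), (x c + x l) = (n - 7) * (x c + b) := by
    rw [sum_congr rfl fun l hl => by rw [hb l (mem_filter.1 hl).2], sum_const, card_leaves,
      nsmul_eq_mul, Nat.cast_sub (by omega)]
    push_cast; ring
  have hmids : ∑ m ∈ ({w | IsS3Mid n w.val} : Finset (Fin n)), (x c + x m) = 3 * (x c + d) := by
    rw [sum_congr rfl fun m hm => by rw [hd m (mem_filter.1 hm).2], sum_const, card_mids hn,
      nsmul_eq_mul]
    push_cast; ring
  rw [signlessLaplacian_mulVec_apply, hN, sum_union hdisj, hleaves, hmids]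

end mulVec

/-- The entries on the centre, the star leaves, the middle vertices and the path ends solve the
eigen-equations of `Q` at every vertex but the centre, normalised to `μ - 1` at the path ends. -/
noncomputable def eigenVec (n : ℕ) (μ : ℝ) : Fin n → ℝ := fun w =>
  if w.val = 0 then (μ ^ 2 - 3 * μ + 1) * (μ - 1)
  else if IsS3Leaf n w.val then μ ^ 2 - 3 * μ + 1
  else if IsS3Mid n w.val then (μ - 1) ^ 2
  else μ - 1

variable {μ : ℝ}

theorem eigenVec_center {c : Fin n} (hc : c.val = 0) :
    eigenVec n μ c = (μ ^ 2 - 3 * μ + 1) * (μ - 1) := if_pos hc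

theorem eigenVec_leaf {l : Fin n} (hl : IsS3Leaf n l.val) :
    eigenVec n μ l = μ ^ 2 - 3 * μ + 1 := by
  rw [eigenVec, if_neg (by omega), if_pos hl]

theorem eigenVec_mid (hn : 8 ≤ n) {m : Fin n} (hm : IsS3Mid n m.val) :
    eigenVec n μ m = (μ - 1) ^ 2 := by
  rw [eigenVec, if_neg (by omega), if_neg (by omega), if_pos hm]

theorem eigenVec_end (hn : 8 ≤ n) {m p : Fin n} (hm : IsS3Mid n m.val) (hp : p.val = m.val + 1) :
    eigenVec n μ p = μ - 1 := by
  rw [eigenVec, if_neg (by omega), if_neg (by omega), if_neg (by omega)]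

theorem mulVec_eigenVec_center (hn : 8 ≤ n) {c : Fin n} (hc : c.val = 0) :
    (signlessLaplacian (graphS3 n) *ᵥ eigenVec n μ) c
      = μ * eigenVec n μ c - μ * phi₁ n μ := by
  rw [mulVec_center _ hn hc (fun _ => eigenVec_leaf) (fun _ => eigenVec_mid hn),
    eigenVec_center hc, phi₁]
  ring

theorem mulVec_eigenVec_of_ne_center (hn : 8 ≤ n) {u : Fin n} (hu : u.val ≠ 0) :
    (signlessLaplacian (graphS3 n) *ᵥ eigenVec n μ) u = μ * eigenVec n μ u := by
  have hc : (⟨0, by omega⟩ : Fin n).val = 0 := rfl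
  rcases vertex_cases hn u with hu' | hl | hm | ⟨m, hm, hp⟩
  · exact absurd hu' hu
  · rw [mulVec_leaf _ hn hc hl, eigenVec_leaf hl, eigenVec_center hc]
    ring
  · have hp : (⟨u.val + 1, by omega⟩ : Fin n).val = u.val + 1 := rfl
    rw [mulVec_mid _ hn hc hm hp, eigenVec_mid hn hm, eigenVec_center hc, eigenVec_end hn hm hp]
    ring
  · rw [mulVec_end _ hn hm hp, eigenVec_end hn hm hp, eigenVec_mid hn hm]
    ring

theorem exists_eq_smul_eigenVec (hn : 8 ≤ n) (hμ : 3 < μ) {x : Fin n → ℝ}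
    (h : signlessLaplacian (graphS3 n) *ᵥ x = μ • x) :
    ∃ t : ℝ, x = t • eigenVec n μ := by
  set c : Fin n := ⟨0, by omega⟩
  have hc : c.val = 0 := rfl
  set s := μ ^ 2 - 3 * μ + 1 with hs_def
  have hs : 0 < s := by nlinarith
  have hμ1 : 0 < μ - 1 := by linarith
  have e : ∀ u, (signlessLaplacian (graphS3 n) *ᵥ x) u = μ * x u := fun u => by rw [h]; rfl
  have hpath : ∀ m p : Fin n, IsS3Mid n m.val → p.val = m.val + 1 →
      x p * s = x c ∧ x m = (μ - 1) * x p := by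
    intro m p hm hp
    have em := e m
    have ep := e p
    rw [mulVec_mid x hn hc hm hp] at em
    rw [mulVec_end x hn hm hp] at ep
    constructor
    · linear_combination -em + (2 - μ) * ep + x p * hs_def
    · linear_combination ep
  refine ⟨x c / (s * (μ - 1)), funext fun u => ?_⟩
  rw [Pi.smul_apply, smul_eq_mul, div_mul_eq_mul_div, eq_div_iff (by positivity)]
  rcases vertex_cases hn u with hu | hl | hm | ⟨m, hm, hp⟩
  · rw [show u = c from Fin.ext hu, eigenVec_center hc]
  · have el := e u
    rw [mulVec_leaf x hn hc hl] at el
    rw [eigenVec_leaf hl]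
    linear_combination -s * el
  · have hp : (⟨u.val + 1, by omega⟩ : Fin n).val = u.val + 1 := rfl
    obtain ⟨h1, h2⟩ := hpath u _ hm hp
    rw [eigenVec_mid hn hm]
    linear_combination (μ - 1) ^ 2 * h1 + s * (μ - 1) * h2
  · obtain ⟨h1, -⟩ := hpath m u hm hp
    rw [eigenVec_end hn hm hp]
    linear_combination (μ - 1) * h1

theorem phi₁_eq_zero_of_eigenvalue (hn : 8 ≤ n) (hμ : 3 < μ) {x : Fin n → ℝ}
    (hx : x ≠ 0) (h : signlessLaplacian (graphS3 n) *ᵥ x = μ • x) : phi₁ n μ = 0 := by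
  obtain ⟨t, rfl⟩ := exists_eq_smul_eigenVec hn hμ h
  have ht : t ≠ 0 := by rintro rfl; exact hx (zero_smul _ _)
  have hc := congrFun h ⟨0, by omega⟩
  simp only [Matrix.mulVec_smul, Pi.smul_apply, smul_eq_mul] at hc
  rw [mulVec_eigenVec_center hn rfl] at hc
  have : t * μ * phi₁ n μ = 0 := by linear_combination -hc
  simpa [ht, (by linarith : μ ≠ 0)] using this

theorem exists_eigenvector_of_phi₁_eq_zero (hn : 8 ≤ n) (hμ : phi₁ n μ = 0) :
    ∃ x : Fin n → ℝ, x ≠ 0 ∧ signlessLaplacian (graphS3 n) *ᵥ x = μ • x := by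
  have hμ1 : μ - 1 ≠ 0 := by
    rintro hμ1
    rw [sub_eq_zero.1 hμ1, phi₁] at hμ
    have : (8 : ℝ) ≤ n := by exact_mod_cast hn
    linarith
  refine ⟨eigenVec n μ, fun h0 => hμ1 ?_, funext fun u => ?_⟩
  · have hend := congrFun h0 ⟨n - 1, by omega⟩
    rwa [eigenVec_end hn (m := ⟨n - 2, by omega⟩) (Or.inr (Or.inr rfl)) (by simp only; omega)]
      at hend
  by_cases hu : u.val = 0
  · rw [mulVec_eigenVec_center hn hu, hμ, Pi.smul_apply, smul_eq_mul, mul_zero, sub_zero]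
  · exact mulVec_eigenVec_of_ne_center hn hu

end graphS3

/-- Lemma 2.4(i): the `Q`-index of `S_{n,3}` is the largest real root of
`φ₁(x,n) = x³ - n x² + (3n - 8) x - n`. -/
theorem qIndex_S3_largest_root (n : ℕ) (hn : 8 ≤ n) :
    IsGreatest {x : ℝ | x ^ 3 - (n : ℝ) * x ^ 2 + (3 * (n : ℝ) - 8) * x - (n : ℝ) = 0}
      (qIndex (graphS3 n)) := by
  have hn' : (8 : ℝ) ≤ n := by exact_mod_cast hn
  obtain ⟨r, hr, hr_ge⟩ := exists_isGreatest_phi₁_eq_zero (n := n) (by linarith)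
  suffices qIndex (graphS3 n) = r by rw [this]; exact hr
  refine IsGreatest.csSup_eq ⟨graphS3.exists_eigenvector_of_phi₁_eq_zero hn hr.1, ?_⟩
  rintro μ ⟨x, hx, h⟩
  rcases le_or_gt μ 3 with hμ | hμ
  · linarith
  · exact hr.2 (graphS3.phi₁_eq_zero_of_eigenvalue hn hμ hx h)
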